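/- arXiv:2009.06885 — 2 statements merged into one kernel-verified Lean document; each statement's English description precedes it below -/
import Mathlib

section
/- (Putinar's Positivstellensatz) Let g₁, …, g_m ∈ ℝ[x₁,…,x_n] and S = {x ∈ ℝⁿ : g_i(x) ≥ 0 for i = 1,…,m}. Let M_S = {σ₀ + Σ_{j=1}^m σ_j g_j : σ₀, σ₁, …, σ_m are sums of squares of polynomials} be the associated quadratic module, and assume M_S is Archimedean (i.e., there exists N ∈ ℕ with N − Σ_{i=1}^n x_i² ∈ M_S; this implies S is compact). If V ∈ ℝ[x₁,…,x_n] satisfies V(x) > 0 for all x ∈ S, then V ∈ M_S. -/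
/-!
Call a quadratic module `M` in a commutative `ℝ`-algebra `A` Archimedean if every `x` is bounded,
`r ± x ∈ M` for some real `r`. The bounded elements form a subalgebra, so `N - Σ xᵢ² ∈ M` makes
`M` Archimedean in `ℝ[x₁, …, xₙ]`.

If `-1 ∈ M + Σ²·(-V)`, then `sV - 1 ∈ M` for a sum of squares `s`. Whenever `sa - 1 ∈ M`, an
explicit identity turns `a + ℓ ∈ M` into `a + θℓ ∈ M` for a fixed `θ < 1`, so `a + ε ∈ M` for all
`ε > 0`; applied to `a = V - δ` (and `2s` in place of `s`) this gives `V ∈ M`. Otherwise Zorn's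
lemma extends `M + Σ²·(-V)` to a maximal quadratic module `Q ∌ -1`, which satisfies `Q ∪ -Q = A`.
Then every element of `A` is infinitely close, in the order of `Q`, to a unique real number, its
standard part. Taking standard parts is an `ℝ`-algebra homomorphism `A → ℝ` that is nonnegative on
`Q`: for polynomials, evaluation at a point of `S` where `V ≤ 0`.
-/

/-- A multivariate real polynomial is a sum of squares. -/
def IsSOS {n : ℕ} (p : MvPolynomial (Fin n) ℝ) : Prop :=
  ∃ (k : ℕ) (q : Fin k → MvPolynomial (Fin n) ℝ), p = ∑ i, (q i) ^ 2

/-- Membership in the quadratic module generated by `g 1, …, g m`: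
`p = σ₀ + Σ_{j=1}^m σⱼ gⱼ` with all `σⱼ` sums of squares. -/
def MemQuadraticModule {n m : ℕ} (g : Fin m → MvPolynomial (Fin n) ℝ)
    (p : MvPolynomial (Fin n) ℝ) : Prop :=
  ∃ σ₀ : MvPolynomial (Fin n) ℝ, ∃ σ : Fin m → MvPolynomial (Fin n) ℝ,
    IsSOS σ₀ ∧ (∀ j, IsSOS (σ j)) ∧ p = σ₀ + ∑ j, σ j * g j

open scoped algebraMap

theorem pos_mem_of_forall_mul_mem {S : Set ℝ} {u θ : ℝ} (hS : ∀ x ∈ S, ∀ y, x ≤ y → y ∈ S)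
    (hu : u ∈ S) (hu0 : 0 ≤ u) (hθ0 : 0 ≤ θ) (hθ1 : θ < 1)
    (hθS : ∀ ℓ ∈ S, 0 ≤ ℓ → ℓ ≤ u → θ * ℓ ∈ S) {ε : ℝ} (hε : 0 < ε) : ε ∈ S := by
  have hpow (N : ℕ) : θ ^ N * u ∈ S := by
    induction N with
    | zero => simpa using hu
    | succ N ih =>
      rw [pow_succ', mul_assoc]
      exact hθS _ ih (by positivity) (mul_le_of_le_one_left hu0 (pow_le_one₀ hθ0 hθ1.le))
  obtain ⟨N, hN⟩ := (((tendsto_pow_atTop_nhds_zero_of_lt_one hθ0 hθ1).mul_const u).eventually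
    (gt_mem_nhds (by simpa using hε))).exists
  exact hS _ (hpow N) ε hN.le

section Basic

variable {A : Type*} [CommRing A]

structure IsQuadraticModule (M : Set A) : Prop where
  add_mem {x y : A} : x ∈ M → y ∈ M → x + y ∈ M
  one_mem : 1 ∈ M
  mul_self_mul_mem (a : A) {x : A} : x ∈ M → a * a * x ∈ M

def quadraticModuleAdjoin (M : Set A) (b : A) : Set A :=
  {x | ∃ q ∈ M, ∃ s, IsSumSq s ∧ x = q + s * b}

theorem subset_quadraticModuleAdjoin (M : Set A) (b : A) : M ⊆ quadraticModuleAdjoin M b :=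
  fun q hq => ⟨q, hq, 0, .zero, by ring⟩

theorem IsQuadraticModule.sUnion {c : Set (Set A)} (hc : ∀ Q ∈ c, IsQuadraticModule Q)
    (hchain : IsChain (· ⊆ ·) c) (hne : c.Nonempty) : IsQuadraticModule (⋃₀ c) where
  add_mem := by
    rintro x y ⟨Q, hQ, hx⟩ ⟨Q', hQ', hy⟩
    rcases hchain.total hQ hQ' with h | h
    · exact ⟨Q', hQ', (hc Q' hQ').add_mem (h hx) hy⟩
    · exact ⟨Q, hQ, (hc Q hQ).add_mem hx (h hy)⟩
  one_mem := let ⟨Q, hQ⟩ := hne; ⟨Q, hQ, (hc Q hQ).one_mem⟩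
  mul_self_mul_mem a := by
    rintro x ⟨Q, hQ, hx⟩
    exact ⟨Q, hQ, (hc Q hQ).mul_self_mul_mem a hx⟩

variable [Algebra ℝ A]

def AbsLE (M : Set A) (x : A) (r : ℝ) : Prop := (r : A) - x ∈ M ∧ (r : A) + x ∈ M

def IsArchimedean (M : Set A) : Prop := ∀ x : A, ∃ r : ℝ, AbsLE M x r

def IsInfinitesimal (M : Set A) (x : A) : Prop := ∀ ε : ℝ, 0 < ε → AbsLE M x ε

variable {M : Set A} {x : A} {r : ℝ}

theorem AbsLE.neg (h : AbsLE M x r) : AbsLE M (-x) r :=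
  ⟨by simpa [sub_neg_eq_add] using h.2, by simpa [← sub_eq_add_neg] using h.1⟩

theorem IsInfinitesimal.neg (h : IsInfinitesimal M x) : IsInfinitesimal M (-x) :=
  fun ε hε => (h ε hε).neg

theorem IsArchimedean.mono {Q : Set A} (h : IsArchimedean M) (hMQ : M ⊆ Q) : IsArchimedean Q :=
  fun x => let ⟨r, h₁, h₂⟩ := h x; ⟨r, hMQ h₁, hMQ h₂⟩

end Basic

namespace IsQuadraticModule

variable {A : Type*} [CommRing A] {M : Set A} (hM : IsQuadraticModule M)
include hM

theorem sumSq_mul_mem {s x : A} (hs : IsSumSq s) (hx : x ∈ M) : s * x ∈ M := by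
  induction hs with
  | zero => simpa using hM.mul_self_mul_mem 0 hx
  | sq_add a _ ih => rw [add_mul]; exact hM.add_mem (hM.mul_self_mul_mem a hx) ih

theorem sumSq_mem {s : A} (hs : IsSumSq s) : s ∈ M := by
  simpa using hM.sumSq_mul_mem hs hM.one_mem

theorem sq_mul_mem (a : A) {x : A} (hx : x ∈ M) : a ^ 2 * x ∈ M := by
  rw [sq]; exact hM.mul_self_mul_mem a hx

theorem sq_mem (a : A) : a ^ 2 ∈ M := by
  simpa using hM.sq_mul_mem a hM.one_mem

theorem adjoin (b : A) : IsQuadraticModule (quadraticModuleAdjoin M b) where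
  add_mem := by
    rintro _ _ ⟨q, hq, s, hs, rfl⟩ ⟨q', hq', s', hs', rfl⟩
    exact ⟨q + q', hM.add_mem hq hq', s + s', hs.add hs', by ring⟩
  one_mem := ⟨1, hM.one_mem, 0, .zero, by ring⟩
  mul_self_mul_mem a := by
    rintro _ ⟨q, hq, s, hs, rfl⟩
    exact ⟨a * a * q, hM.mul_self_mul_mem a hq, a * a * s, (IsSumSq.mul_self a).mul hs, by ring⟩

theorem mem_adjoin_self (b : A) : b ∈ quadraticModuleAdjoin M b :=
  ⟨0, hM.sumSq_mem .zero, 1, .one, by ring⟩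

theorem exists_maximal (hM1 : (-1 : A) ∉ M) :
    ∃ Q, M ⊆ Q ∧ Maximal (fun Q : Set A => IsQuadraticModule Q ∧ (-1 : A) ∉ Q) Q :=
  zorn_subset_nonempty {Q : Set A | IsQuadraticModule Q ∧ (-1 : A) ∉ Q}
    (fun c hc hchain hne => ⟨⋃₀ c,
      ⟨.sUnion (fun _ hQ => (hc hQ).1) hchain hne,
        fun h => let ⟨_, hQc, hQ⟩ := Set.mem_sUnion.1 h; (hc hQc).2 hQ⟩,
      fun _ => Set.subset_sUnion_of_mem⟩) M ⟨hM, hM1⟩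

variable [Algebra ℝ A]

theorem algebraMap_mul_mem {r : ℝ} (hr : 0 ≤ r) {x : A} (hx : x ∈ M) : (r : A) * x ∈ M := by
  have h : (r : A) = (√r : ℝ) * (√r : ℝ) := by
    rw [← algebraMap.coe_mul, Real.mul_self_sqrt hr]
  rw [h]
  exact hM.mul_self_mul_mem _ hx

theorem algebraMap_mem {r : ℝ} (hr : 0 ≤ r) : (r : A) ∈ M := by
  simpa using hM.algebraMap_mul_mem hr hM.one_mem

theorem add_algebraMap_mem {x : A} (hx : x ∈ M) {r : ℝ} (hr : 0 ≤ r) : x + r ∈ M :=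
  hM.add_mem hx (hM.algebraMap_mem hr)

theorem mem_of_algebraMap_mul_mem {r : ℝ} (hr : 0 < r) {x : A} (h : (r : A) * x ∈ M) : x ∈ M := by
  simpa [← mul_assoc, ← algebraMap.coe_mul, hr.ne'] using
    hM.algebraMap_mul_mem (inv_nonneg.2 hr.le) h

theorem nonneg_of_algebraMap_mem (hM1 : (-1 : A) ∉ M) {r : ℝ} (h : (r : A) ∈ M) : 0 ≤ r := by
  by_contra! hr
  refine hM1 ?_
  simpa [← mul_assoc, ← algebraMap.coe_mul, hr.ne] using
    hM.algebraMap_mul_mem (neg_nonneg.2 (inv_nonpos.2 hr.le)) h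

theorem absLE_mono {x : A} {r s : ℝ} (h : AbsLE M x r) (hrs : r ≤ s) : AbsLE M x s := by
  have hsr := sub_nonneg.2 hrs
  constructor
  · convert hM.add_algebraMap_mem h.1 hsr using 1; push_cast; ring
  · convert hM.add_algebraMap_mem h.2 hsr using 1; push_cast; ring

theorem absLE_algebraMap (c : ℝ) : AbsLE M c |c| := by
  constructor
  · rw [← algebraMap.coe_sub]; exact hM.algebraMap_mem (by linarith [le_abs_self c])
  · rw [← algebraMap.coe_add]; exact hM.algebraMap_mem (by linarith [neg_abs_le c])

theorem absLE_add {x y : A} {r s : ℝ} (hx : AbsLE M x r) (hy : AbsLE M y s) :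
    AbsLE M (x + y) (r + s) := by
  constructor
  · convert hM.add_mem hx.1 hy.1 using 1; push_cast; ring
  · convert hM.add_mem hx.2 hy.2 using 1; push_cast; ring

theorem absLE_algebraMap_mul {x : A} {r : ℝ} (h : AbsLE M x r) (c : ℝ) :
    AbsLE M (c * x) (|c| * r) := by
  rcases le_total 0 c with hc | hc
  · rw [abs_of_nonneg hc]
    constructor
    · convert hM.algebraMap_mul_mem hc h.1 using 1; push_cast; ring
    · convert hM.algebraMap_mul_mem hc h.2 using 1; push_cast; ring
  · rw [abs_of_nonpos hc]
    constructor
    · convert hM.algebraMap_mul_mem (neg_nonneg.2 hc) h.2 using 1; push_cast; ring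
    · convert hM.algebraMap_mul_mem (neg_nonneg.2 hc) h.1 using 1; push_cast; ring

theorem absLE_of_algebraMap_mul {x : A} {r c : ℝ} (h : AbsLE M (c * x) r) (hc : 0 < c) :
    AbsLE M x (r / c) := by
  have := hM.absLE_algebraMap_mul h c⁻¹
  rwa [← mul_assoc, ← algebraMap.coe_mul, inv_mul_cancel₀ hc.ne', algebraMap.coe_one, one_mul,
    abs_of_pos (inv_pos.2 hc), inv_mul_eq_div] at this

theorem sq_sub_sq_mem {x : A} {r : ℝ} (h : AbsLE M x r) (hr : 0 < r) : (r : A) ^ 2 - x ^ 2 ∈ M := by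
  refine hM.mem_of_algebraMap_mul_mem (mul_pos two_pos hr) ?_
  convert hM.add_mem (hM.sq_mul_mem ((r : A) + x) h.1) (hM.sq_mul_mem ((r : A) - x) h.2) using 1
  push_cast [map_ofNat]
  ring

theorem absLE_mul {x y : A} {r s : ℝ} (hx : AbsLE M x r) (hy : AbsLE M y s) (hrs : 0 < r + s) :
    AbsLE M (x * y) ((r + s) ^ 2 / 4) := by
  have hp := hM.sq_sub_sq_mem (hM.absLE_add hx hy) hrs
  have hm := hM.sq_sub_sq_mem (hM.absLE_add hx hy.neg) hrs
  refine hM.absLE_of_algebraMap_mul (c := 4) ⟨?_, ?_⟩ four_pos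
  · convert hM.add_mem hp (hM.sq_mem (x + -y)) using 1; push_cast [map_ofNat]; ring
  · convert hM.add_mem hm (hM.sq_mem (x + y)) using 1; push_cast [map_ofNat]; ring

theorem absLE_of_sub_sq_mem {x : A} {N : ℝ} (h : (N : A) - x ^ 2 ∈ M) :
    AbsLE M x ((N + 1) / 2) := by
  refine hM.absLE_of_algebraMap_mul (c := 2) ⟨?_, ?_⟩ two_pos
  · convert hM.add_mem (hM.sq_mem (x - 1)) h using 1; push_cast [map_ofNat]; ring
  · convert hM.add_mem (hM.sq_mem (x + 1)) h using 1; push_cast [map_ofNat]; ring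

def boundedSubalgebra : Subalgebra ℝ A where
  carrier := {x | ∃ r, AbsLE M x r}
  mul_mem' := by
    rintro x y ⟨r, hx⟩ ⟨s, hy⟩
    exact ⟨_, hM.absLE_mul (hM.absLE_mono hx (le_max_left r 1))
      (hM.absLE_mono hy (le_max_left s 1)) (by positivity)⟩
  add_mem' := by
    rintro x y ⟨r, hx⟩ ⟨s, hy⟩
    exact ⟨_, hM.absLE_add hx hy⟩
  algebraMap_mem' c := ⟨_, hM.absLE_algebraMap c⟩

theorem isArchimedean_of_adjoin_eq_top {s : Set A} (hs : Algebra.adjoin ℝ s = ⊤)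
    (h : ∀ x ∈ s, ∃ r, AbsLE M x r) : IsArchimedean M := fun x =>
  Algebra.adjoin_le (S := hM.boundedSubalgebra) h (hs ▸ Algebra.mem_top : x ∈ Algebra.adjoin ℝ s)

theorem exists_one_le_absLE (harch : IsArchimedean M) (x : A) : ∃ r, 1 ≤ r ∧ AbsLE M x r :=
  let ⟨r, h⟩ := harch x
  ⟨max r 1, le_max_right r 1, hM.absLE_mono h (le_max_left r 1)⟩

theorem add_algebraMap_mem_contract {σ a : A} {k u ℓ : ℝ} (hσ : IsSumSq σ) (hσa : σ * a - 1 ∈ M)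
    (hk : (k : A) - σ ∈ M) (hu : (u : A) - a ∈ M) (hk0 : 0 < k) (hu0 : 0 < u) (hℓ : 0 ≤ ℓ)
    (hℓu : ℓ ≤ u) (h : a + ℓ ∈ M) : a + ((1 - 1 / (k * u)) * ℓ : ℝ) ∈ M := by
  set c := ℓ / (2 * (k * u)) with hc_def
  have hc : 0 ≤ c := by positivity
  have hθ : (1 - 1 / (k * u)) * ℓ = ℓ - 2 * c := by rw [hc_def]; field_simp
  have hck : c * (ℓ + u) * k ≤ ℓ := by
    have : c * (ℓ + u) * k = ℓ * ((ℓ + u) / (2 * u)) := by rw [hc_def]; field_simp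
    rw [this]
    exact mul_le_of_le_one_right hℓ ((div_le_one (by positivity)).2 (by linarith))
  rw [hθ]
  -- `a + ℓ - 2c = (1 - cσ)²(a + ℓ) + 2c(σa - 1) + (cσ)²(u - a) + c²(ℓ + u)σ(k - σ)`
  --   `+ c(2ℓ - c(ℓ + u)k)σ`
  convert hM.add_mem (hM.add_mem (hM.add_mem (hM.add_mem
    (hM.sq_mul_mem (1 - c * σ) h)
    (hM.algebraMap_mul_mem (by positivity : (0 : ℝ) ≤ 2 * c) hσa))
    (hM.sq_mul_mem (c * σ) hu))
    (hM.algebraMap_mul_mem (by positivity : 0 ≤ c ^ 2 * (ℓ + u)) (hM.sumSq_mul_mem hσ hk)))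
    (hM.algebraMap_mul_mem (mul_nonneg hc (by linarith) : 0 ≤ c * (2 * ℓ - c * (ℓ + u) * k))
      (hM.sumSq_mem hσ)) using 1
  push_cast [map_ofNat]
  ring

theorem add_algebraMap_mem_of_sumSq_mul_sub_one_mem (harch : IsArchimedean M) {σ a : A}
    (hσ : IsSumSq σ) (h : σ * a - 1 ∈ M) {ε : ℝ} (hε : 0 < ε) : a + ε ∈ M := by
  obtain ⟨k, hk1, hk⟩ := hM.exists_one_le_absLE harch σ
  obtain ⟨u, hu1, hu⟩ := hM.exists_one_le_absLE harch a
  have hku : 1 ≤ k * u := one_le_mul_of_one_le_of_one_le hk1 hu1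
  refine pos_mem_of_forall_mul_mem (S := {ℓ : ℝ | a + ℓ ∈ M})
    (θ := 1 - 1 / (k * u)) ?_ (by simpa [add_comm] using hu.2)
    (by positivity) ?_ (sub_lt_self 1 (by positivity)) ?_ hε
  · intro x hx y hxy
    show a + (y : A) ∈ M
    convert hM.add_algebraMap_mem hx (sub_nonneg.2 hxy) using 1
    push_cast
    ring
  · exact sub_nonneg.2 (div_le_one_of_le₀ hku (by positivity))
  · exact fun ℓ hℓ hℓ0 hℓu =>
      hM.add_algebraMap_mem_contract hσ h hk.1 hu.1 (by positivity) (by positivity) hℓ0 hℓu hℓ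

theorem mem_of_sumSq_mul_sub_one_mem (harch : IsArchimedean M) {σ a : A} (hσ : IsSumSq σ)
    (h : σ * a - 1 ∈ M) : a ∈ M := by
  obtain ⟨k, hk1, hk⟩ := hM.exists_one_le_absLE harch σ
  have hk0 : 0 < k := by positivity
  have e₁ := congrArg (fun t : ℝ => (t : A)) (show (2 * k)⁻¹ * 2 = k⁻¹ by field_simp)
  have e₂ := congrArg (fun t : ℝ => (t : A)) (inv_mul_cancel₀ hk0.ne')
  push_cast [map_ofNat] at e₁ e₂
  -- `(σ + σ)(a - (2k)⁻¹) - 1 = 2(σa - 1) + k⁻¹(k - σ)`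
  have h' : (σ + σ) * (a - ((2 * k)⁻¹ : ℝ)) - 1 ∈ M := by
    convert hM.add_mem (hM.add_mem h h) (hM.algebraMap_mul_mem (inv_nonneg.2 hk0.le) hk.1) using 1
    linear_combination (-σ) * e₁ - e₂
  simpa using hM.add_algebraMap_mem_of_sumSq_mul_sub_one_mem harch (hσ.add hσ) h'
    (inv_pos.2 (mul_pos two_pos hk0))

theorem isInfinitesimal_zero : IsInfinitesimal M 0 := fun _ hε => by
  simpa [AbsLE] using hM.algebraMap_mem hε.le

theorem isInfinitesimal_add {x y : A} (hx : IsInfinitesimal M x) (hy : IsInfinitesimal M y) :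
    IsInfinitesimal M (x + y) := fun ε hε => by
  simpa using hM.absLE_add (hx _ (half_pos hε)) (hy _ (half_pos hε))

theorem isInfinitesimal_sub {x y : A} (hx : IsInfinitesimal M x) (hy : IsInfinitesimal M y) :
    IsInfinitesimal M (x - y) := by
  simpa [← sub_eq_add_neg] using hM.isInfinitesimal_add hx hy.neg

theorem isInfinitesimal_algebraMap_mul {x : A} (hx : IsInfinitesimal M x) (c : ℝ) :
    IsInfinitesimal M (c * x) := fun ε hε => by
  refine hM.absLE_mono (hM.absLE_algebraMap_mul (hx (ε / (|c| + 1)) (by positivity)) c) ?_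
  rw [← mul_div_assoc, div_le_iff₀ (by positivity)]
  nlinarith [abs_nonneg c]

theorem isInfinitesimal_mul {x y : A} (hx : IsInfinitesimal M x) (hy : IsInfinitesimal M y) :
    IsInfinitesimal M (x * y) := fun ε hε => by
  have hs := Real.sqrt_pos.2 hε
  convert hM.absLE_mul (hx _ hs) (hy _ hs) (by positivity) using 1
  rw [← two_mul, mul_pow, Real.sq_sqrt hε.le]
  ring

variable (hM1 : (-1 : A) ∉ M)
include hM1

theorem eq_zero_of_isInfinitesimal_algebraMap {c : ℝ} (h : IsInfinitesimal M c) : c = 0 := by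
  have hc (ε : ℝ) (hε : 0 < ε) : |c| ≤ 0 + ε := by
    obtain ⟨h₁, h₂⟩ := h ε hε
    rw [← algebraMap.coe_sub] at h₁
    rw [← algebraMap.coe_add] at h₂
    have := hM.nonneg_of_algebraMap_mem hM1 h₁
    have := hM.nonneg_of_algebraMap_mem hM1 h₂
    exact abs_le.2 ⟨by linarith, by linarith⟩
  exact abs_eq_zero.1 (le_antisymm (le_of_forall_pos_le_add hc) (abs_nonneg c))

theorem eq_of_isInfinitesimal_sub {x : A} {r s : ℝ} (hr : IsInfinitesimal M (x - r))
    (hs : IsInfinitesimal M (x - s)) : r = s := by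
  have := hM.eq_zero_of_isInfinitesimal_algebraMap hM1 (c := s - r)
    (by convert hM.isInfinitesimal_sub hr hs using 1; push_cast; ring)
  linarith

variable (htot : ∀ x, x ∈ M ∨ -x ∈ M) (harch : IsArchimedean M)
include htot harch

theorem exists_isInfinitesimal_sub (x : A) : ∃ r : ℝ, IsInfinitesimal M (x - r) := by
  obtain ⟨R, hR⟩ := harch x
  set L := {r : ℝ | x - r ∈ M}
  have hbdd : BddAbove L := ⟨R, fun r hr => by
    have := hM.nonneg_of_algebraMap_mem hM1 (r := R - r)
      (by convert hM.add_mem hR.1 hr using 1; push_cast; ring)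
    linarith⟩
  have hne : L.Nonempty := ⟨-R, by simpa [L, add_comm] using hR.2⟩
  refine ⟨sSup L, fun ε hε => ⟨?_, ?_⟩⟩
  · rcases htot (x - (sSup L + ε : ℝ)) with h | h
    · linarith [le_csSup hbdd h]
    · convert h using 1; push_cast; ring
  · obtain ⟨r, hr, hlt⟩ := exists_lt_of_lt_csSup hne (sub_lt_self (sSup L) hε)
    convert hM.add_algebraMap_mem hr (sub_nonneg.2 hlt.le) using 1
    push_cast
    ring

noncomputable def standardPart (x : A) : ℝ :=
  (hM.exists_isInfinitesimal_sub hM1 htot harch x).choose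

theorem isInfinitesimal_sub_standardPart (x : A) :
    IsInfinitesimal M (x - hM.standardPart hM1 htot harch x) :=
  (hM.exists_isInfinitesimal_sub hM1 htot harch x).choose_spec

theorem standardPart_eq {x : A} {r : ℝ} (h : IsInfinitesimal M (x - r)) :
    hM.standardPart hM1 htot harch x = r :=
  hM.eq_of_isInfinitesimal_sub hM1 (hM.isInfinitesimal_sub_standardPart hM1 htot harch x) h

noncomputable def standardPartHom : A →ₐ[ℝ] ℝ where
  toFun := hM.standardPart hM1 htot harch
  map_one' := hM.standardPart_eq hM1 htot harch (by simpa using hM.isInfinitesimal_zero)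
  map_mul' x y := by
    have hx := hM.isInfinitesimal_sub_standardPart hM1 htot harch x
    have hy := hM.isInfinitesimal_sub_standardPart hM1 htot harch y
    refine hM.standardPart_eq hM1 htot harch ?_
    convert hM.isInfinitesimal_add (hM.isInfinitesimal_add (hM.isInfinitesimal_mul hx hy)
      (hM.isInfinitesimal_algebraMap_mul hy (hM.standardPart hM1 htot harch x)))
      (hM.isInfinitesimal_algebraMap_mul hx (hM.standardPart hM1 htot harch y)) using 1
    push_cast
    ring
  map_zero' := hM.standardPart_eq hM1 htot harch (by simpa using hM.isInfinitesimal_zero)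
  map_add' x y := by
    have hx := hM.isInfinitesimal_sub_standardPart hM1 htot harch x
    have hy := hM.isInfinitesimal_sub_standardPart hM1 htot harch y
    refine hM.standardPart_eq hM1 htot harch ?_
    convert hM.isInfinitesimal_add hx hy using 1
    push_cast
    ring
  commutes' r := hM.standardPart_eq hM1 htot harch (by simpa using hM.isInfinitesimal_zero)

theorem standardPartHom_nonneg {x : A} (hx : x ∈ M) : 0 ≤ hM.standardPartHom hM1 htot harch x := by
  show 0 ≤ hM.standardPart hM1 htot harch x
  by_contra! hneg
  set r := hM.standardPart hM1 htot harch x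
  obtain ⟨h, -⟩ := hM.isInfinitesimal_sub_standardPart hM1 htot harch x (-r / 2) (by linarith)
  have := hM.nonneg_of_algebraMap_mem hM1 (r := -r / 2 + r)
    (by convert hM.add_mem h hx using 1; push_cast; ring)
  linarith

end IsQuadraticModule

theorem mem_or_neg_mem_of_maximal {A : Type*} [CommRing A] [Algebra ℝ A] {Q : Set A}
    (hQ : Maximal (fun Q : Set A => IsQuadraticModule Q ∧ (-1 : A) ∉ Q) Q) (b : A) :
    b ∈ Q ∨ -b ∈ Q := by
  obtain ⟨⟨hQ, hQ1⟩, hmax⟩ := hQ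
  have neg_one_eq (b : A) (hb : b ∉ Q) : ∃ q ∈ Q, ∃ s, IsSumSq s ∧ -1 = q + s * b := by
    by_contra! h
    exact hb (hmax ⟨hQ.adjoin b, fun ⟨q, hq, s, hs, he⟩ => h q hq s hs he⟩
      (subset_quadraticModuleAdjoin Q b) (hQ.mem_adjoin_self b))
  by_contra! hb
  obtain ⟨q₁, hq₁, s₁, hs₁, h₁⟩ := neg_one_eq b hb.1
  obtain ⟨q₂, hq₂, s₂, hs₂, h₂⟩ := neg_one_eq (-b) hb.2
  have hneg : -s₁ ∈ Q := by
    convert hQ.add_mem (hQ.add_mem (hQ.sumSq_mul_mem hs₂ hq₁) (hQ.sumSq_mul_mem hs₁ hq₂))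
      (hQ.sumSq_mem hs₂) using 1
    linear_combination s₂ * h₁ + s₁ * h₂
  -- `4 s₁ b = (b + 1)² s₁ + (b - 1)² (-s₁)`
  have hs₁b : s₁ * b ∈ Q := by
    refine hQ.mem_of_algebraMap_mul_mem (r := 4) four_pos ?_
    convert hQ.add_mem (hQ.sq_mul_mem (b + 1) (hQ.sumSq_mem hs₁)) (hQ.sq_mul_mem (b - 1) hneg)
      using 1
    push_cast [map_ofNat]
    ring
  exact hQ1 (h₁ ▸ hQ.add_mem hq₁ hs₁b)

theorem IsQuadraticModule.mem_of_forall_algHom_pos {A : Type*} [CommRing A] [Algebra ℝ A]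
    {M : Set A} (hM : IsQuadraticModule M) (harch : IsArchimedean M) {f : A}
    (hf : ∀ φ : A →ₐ[ℝ] ℝ, (∀ x ∈ M, 0 ≤ φ x) → 0 < φ f) : f ∈ M := by
  by_cases h : (-1 : A) ∈ quadraticModuleAdjoin M (-f)
  · obtain ⟨q, hq, s, hs, he⟩ := h
    exact hM.mem_of_sumSq_mul_sub_one_mem harch hs (by convert hq using 1; linear_combination he)
  · obtain ⟨Q, hMQ, hQmax⟩ := (hM.adjoin (-f)).exists_maximal h
    obtain ⟨hQ, hQ1⟩ := hQmax.prop
    have hMQ' := (subset_quadraticModuleAdjoin M (-f)).trans hMQ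
    let φ := hQ.standardPartHom hQ1 (mem_or_neg_mem_of_maximal hQmax) (harch.mono hMQ')
    have hφf : 0 ≤ φ (-f) := hQ.standardPartHom_nonneg _ _ _ (hMQ (hM.mem_adjoin_self (-f)))
    have := hf φ fun x hx => hQ.standardPartHom_nonneg _ _ _ (hMQ' hx)
    rw [map_neg] at hφf
    linarith

section Polynomial

open MvPolynomial

theorem IsQuadraticModule.isArchimedean_of_sub_sum_sq_mem {σ : Type*} [Fintype σ]
    {M : Set (MvPolynomial σ ℝ)} (hM : IsQuadraticModule M) {N : ℝ}
    (hN : (N : MvPolynomial σ ℝ) - ∑ i, X i ^ 2 ∈ M) : IsArchimedean M := by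
  classical
  refine hM.isArchimedean_of_adjoin_eq_top adjoin_range_X ?_
  rintro _ ⟨i, rfl⟩
  refine ⟨_, hM.absLE_of_sub_sq_mem (N := N) ?_⟩
  convert hM.add_mem hN (hM.sumSq_mem (IsSumSq.sum_sq (Finset.univ.erase i) X)) using 1
  rw [← Finset.add_sum_erase _ _ (Finset.mem_univ i)]
  ring

variable {n m : ℕ}

theorem isSOS_iff_isSumSq {p : MvPolynomial (Fin n) ℝ} : IsSOS p ↔ IsSumSq p := by
  constructor
  · rintro ⟨k, q, rfl⟩
    exact IsSumSq.sum_sq _ q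
  · intro h
    induction h with
    | zero => exact ⟨0, 0, by simp⟩
    | sq_add a _ ih =>
      obtain ⟨k, q, rfl⟩ := ih
      exact ⟨k + 1, Fin.cons a q, by simp [Fin.sum_univ_succ, sq]⟩

theorem memQuadraticModule_iff {g : Fin m → MvPolynomial (Fin n) ℝ} {p : MvPolynomial (Fin n) ℝ} :
    MemQuadraticModule g p ↔ ∃ (σ₀ : MvPolynomial (Fin n) ℝ) (σ : Fin m → MvPolynomial (Fin n) ℝ),
      IsSumSq σ₀ ∧ (∀ j, IsSumSq (σ j)) ∧ p = σ₀ + ∑ j, σ j * g j := by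
  simp only [MemQuadraticModule, isSOS_iff_isSumSq]

theorem isQuadraticModule_memQuadraticModule (g : Fin m → MvPolynomial (Fin n) ℝ) :
    IsQuadraticModule {p | MemQuadraticModule g p} where
  add_mem hx hy := by
    obtain ⟨a, σ, ha, hσ, rfl⟩ := memQuadraticModule_iff.1 hx
    obtain ⟨b, τ, hb, hτ, rfl⟩ := memQuadraticModule_iff.1 hy
    refine memQuadraticModule_iff.2 ⟨a + b, σ + τ, ha.add hb, fun j => (hσ j).add (hτ j), ?_⟩
    simp only [Pi.add_apply, add_mul, Finset.sum_add_distrib]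
    ring
  one_mem := memQuadraticModule_iff.2 ⟨1, 0, .one, fun _ => .zero, by simp⟩
  mul_self_mul_mem c _ hx := by
    obtain ⟨a, σ, ha, hσ, rfl⟩ := memQuadraticModule_iff.1 hx
    refine memQuadraticModule_iff.2 ⟨c * c * a, fun j => c * c * σ j, (IsSumSq.mul_self c).mul ha,
      fun j => (IsSumSq.mul_self c).mul (hσ j), ?_⟩
    simp only [mul_add, Finset.mul_sum, mul_assoc]

theorem memQuadraticModule_self (g : Fin m → MvPolynomial (Fin n) ℝ) (j : Fin m) :
    MemQuadraticModule g (g j) := by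
  refine memQuadraticModule_iff.2 ⟨0, Pi.single j 1, .zero, fun i => ?_, ?_⟩
  · rcases eq_or_ne i j with rfl | hij
    · simp [IsSumSq.one]
    · simp [hij, IsSumSq.zero]
  · simp [Pi.single_apply]

end Polynomial

/-- Putinar's Positivstellensatz: if the quadratic module `M_S` generated
by `g₁, …, g_m` is Archimedean (there is `N ∈ ℕ` with `N − Σᵢ xᵢ² ∈ M_S`), and
`V > 0` on `S = {x : gᵢ(x) ≥ 0, i = 1,…,m}`, then `V ∈ M_S`. -/
theorem putinar_positivstellensatz {n m : ℕ} (g : Fin m → MvPolynomial (Fin n) ℝ)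
    (harch : ∃ N : ℕ, MemQuadraticModule g
      ((N : MvPolynomial (Fin n) ℝ) - ∑ i : Fin n, (MvPolynomial.X i) ^ 2))
    (V : MvPolynomial (Fin n) ℝ)
    (hpos : ∀ x : Fin n → ℝ, (∀ i, 0 ≤ MvPolynomial.eval x (g i)) →
      0 < MvPolynomial.eval x V) :
    MemQuadraticModule g V := by
  have hM := isQuadraticModule_memQuadraticModule g
  obtain ⟨N, hN⟩ := harch
  have harch' := hM.isArchimedean_of_sub_sum_sq_mem (N := N) (by simpa using hN)
  refine hM.mem_of_forall_algHom_pos harch' fun φ hφ => ?_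
  have hφ_eval (p : MvPolynomial (Fin n) ℝ) : φ p = MvPolynomial.eval (φ ∘ MvPolynomial.X) p := by
    conv_lhs => rw [MvPolynomial.aeval_unique φ]
    rfl
  rw [hφ_eval]
  exact hpos _ fun i => hφ_eval (g i) ▸ hφ _ (memQuadraticModule_self g i)
end

section
/- Let A = [[−1, −2], [−1, −1]] ∈ ℝ^{2×2}, let K = {x ∈ ℝ² : 4x₁ − x₂ ≥ 0 and 4x₂ − x₁ ≥ 0}, and let V(x) = 2.9·x₁² + x₁x₂ + x₂². Then: (i) A has the real eigenvalue −1 + √2 > 0 (so A is not Hurwitz); (ii) V(x) > 0 for every x ∈ ℝ² \ {0}; (iii) every x ∈ K has x₁ ≥ 0 and x₂ ≥ 0; and (iv) ⟨∇V(x), Ax⟩ = −6.8·x₁² − 15.6·x₁x₂ − 4·x₂² < 0 for every x ∈ K \ {0}. -/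
open RealInnerProductSpace

noncomputable section

/-- `A = [[−1, −2], [−1, −1]]`. -/
def Amat : Matrix (Fin 2) (Fin 2) ℝ := !![-1, -2; -1, -1]

/-- The cone `K = {x ∈ ℝ² : 4x₁ − x₂ ≥ 0, 4x₂ − x₁ ≥ 0}`. -/
def Kcone : Set (EuclideanSpace ℝ (Fin 2)) :=
  {x | 0 ≤ 4 * x 0 - x 1 ∧ 0 ≤ 4 * x 1 - x 0}

/-- `V(x) = 2.9 x₁² + x₁x₂ + x₂²`. -/
def Vquad (x : EuclideanSpace ℝ (Fin 2)) : ℝ :=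
  2.9 * (x 0) ^ 2 + x 0 * x 1 + (x 1) ^ 2

/-!
`A` has the eigenvalues `−1 ± √2`, so it is not Hurwitz. Still, `V` decreases along `ẋ = Ax`
inside `K`: combining the two defining inequalities of `K` gives `x₁, x₂ ≥ 0`, and there the
derivative `⟨∇V(x), Ax⟩` is a binary quadratic form all of whose coefficients are negative.
`V` itself is positive definite because its discriminant `1 − 4 · 2.9` is negative.
-/

lemma EuclideanSpace.fin_two_ne_zero_iff {x : EuclideanSpace ℝ (Fin 2)} :
    x ≠ 0 ↔ x 0 ≠ 0 ∨ x 1 ≠ 0 := by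
  rw [Ne, ← not_and_or, not_iff_not]
  refine ⟨fun h => by simp [h], fun ⟨h0, h1⟩ => ?_⟩
  ext i
  fin_cases i <;> simpa

lemma binary_quadratic_pos_of_discrim_neg {a b c x y : ℝ} (ha : 0 < a) (hd : discrim a b c < 0)
    (hxy : x ≠ 0 ∨ y ≠ 0) : 0 < a * x ^ 2 + b * x * y + c * y ^ 2 := by
  have completed_square : 4 * a * (a * x ^ 2 + b * x * y + c * y ^ 2)
      = (2 * a * x + b * y) ^ 2 - discrim a b c * y ^ 2 := by
    rw [discrim]
    ring
  refine pos_of_mul_pos_right (a := 4 * a) ?_ (by positivity)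
  rw [completed_square]
  by_cases hy : y = 0
  · have hx : x ≠ 0 := hxy.resolve_right (not_not.2 hy)
    subst hy
    have : 0 < (2 * a * x) ^ 2 := by positivity
    simpa using this
  · have : 0 < -discrim a b c * y ^ 2 := mul_pos (neg_pos.2 hd) (by positivity)
    linarith [sq_nonneg (2 * a * x + b * y)]

lemma binary_quadratic_pos_of_nonneg {a b c x y : ℝ} (ha : 0 < a) (hb : 0 ≤ b) (hc : 0 < c)
    (hx : 0 ≤ x) (hy : 0 ≤ y) (hxy : x ≠ 0 ∨ y ≠ 0) :
    0 < a * x ^ 2 + b * x * y + c * y ^ 2 := by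
  rcases hxy with hx' | hy'
  · have : 0 < a * x ^ 2 := by positivity
    positivity
  · have : 0 < c * y ^ 2 := by positivity
    positivity

lemma toEuclideanLin_Amat_apply (x : EuclideanSpace ℝ (Fin 2)) :
    Matrix.toEuclideanLin Amat x = !₂[-x 0 - 2 * x 1, -x 0 - x 1] := by
  ext i
  fin_cases i <;> simp [Amat, Matrix.toEuclideanLin, dotProduct, Fin.sum_univ_two] <;> ring

lemma toEuclideanLin_Amat_hasEigenvector :
    Module.End.HasEigenvector (Matrix.toEuclideanLin Amat) (-1 + √2) !₂[√2, -1] := by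
  refine ⟨Module.End.mem_eigenspace_iff.2 ?_, fun h => by simpa using congr($h 1)⟩
  have hsq : √2 * √2 = 2 := Real.mul_self_sqrt zero_le_two
  rw [toEuclideanLin_Amat_apply]
  ext i
  fin_cases i
  · simp only [Fin.isValue, Matrix.cons_val_zero, Matrix.cons_val_one, Matrix.cons_val_fin_one,
      mul_neg, mul_one, sub_neg_eq_add, Fin.zero_eta, PiLp.smul_apply, smul_eq_mul]
    linarith
  · simp

lemma nonneg_of_mem_Kcone {x : EuclideanSpace ℝ (Fin 2)} (hx : x ∈ Kcone) :
    0 ≤ x 0 ∧ 0 ≤ x 1 := by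
  obtain ⟨h₁, h₂⟩ := hx
  constructor <;> linarith

lemma fderiv_Vquad_apply (x v : EuclideanSpace ℝ (Fin 2)) :
    fderiv ℝ Vquad x v = (5.8 * x 0 + x 1) * v 0 + (x 0 + 2 * x 1) * v 1 := by
  have h₀ := (EuclideanSpace.proj (0 : Fin 2) : EuclideanSpace ℝ (Fin 2) →L[ℝ] ℝ).hasFDerivAt
    (x := x)
  have h₁ := (EuclideanSpace.proj (1 : Fin 2) : EuclideanSpace ℝ (Fin 2) →L[ℝ] ℝ).hasFDerivAt
    (x := x)
  have hV : HasFDerivAt Vquad _ x :=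
    (((h₀.pow 2).const_mul (2.9 : ℝ)).add (h₀.mul h₁)).add (h₁.pow 2)
  rw [hV.fderiv]
  simp only [Fin.isValue, PiLp.proj_apply, Nat.add_one_sub_one, pow_one, nsmul_eq_mul,
    Nat.cast_ofNat, add_apply, smul_apply, smul_eq_mul]
  ring

lemma inner_gradient_Vquad_toEuclideanLin_Amat (x : EuclideanSpace ℝ (Fin 2)) :
    ⟪gradient Vquad x, Matrix.toEuclideanLin Amat x⟫ =
      -6.8 * (x 0) ^ 2 - 15.6 * (x 0) * (x 1) - 4 * (x 1) ^ 2 := by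
  rw [inner_gradient_left, fderiv_Vquad_apply, toEuclideanLin_Amat_apply]
  simp only [Matrix.cons_val_zero, Matrix.cons_val_one, Matrix.cons_val_fin_one]
  ring

/-- for `A = [[−1,−2],[−1,−1]]`, `K = {4x₁ − x₂ ≥ 0, 4x₂ − x₁ ≥ 0}` and
`V(x) = 2.9x₁² + x₁x₂ + x₂²`:
(i) `A` has the real eigenvalue `−1 + √2 > 0` (so `A` is not Hurwitz);
(ii) `V(x) > 0` for every `x ≠ 0`;
(iii) every `x ∈ K` has `x₁ ≥ 0` and `x₂ ≥ 0`;
(iv) `⟨∇V(x), Ax⟩ = −6.8x₁² − 15.6x₁x₂ − 4x₂² < 0` for every `x ∈ K \ {0}`. -/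
theorem example_conic_lyapunov :
    (Module.End.HasEigenvalue
        (Matrix.toEuclideanLin Amat : Module.End ℝ (EuclideanSpace ℝ (Fin 2)))
        (-1 + Real.sqrt 2) ∧ 0 < -1 + Real.sqrt 2) ∧
    (∀ x : EuclideanSpace ℝ (Fin 2), x ≠ 0 → 0 < Vquad x) ∧
    (∀ x ∈ Kcone, 0 ≤ x 0 ∧ 0 ≤ x 1) ∧
    (∀ x ∈ Kcone,
      ⟪gradient Vquad x, Matrix.toEuclideanLin Amat x⟫ =
        -6.8 * (x 0) ^ 2 - 15.6 * (x 0) * (x 1) - 4 * (x 1) ^ 2 ∧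
      (x ≠ 0 → ⟪gradient Vquad x, Matrix.toEuclideanLin Amat x⟫ < 0)) := by
  refine ⟨⟨Module.End.hasEigenvalue_of_hasEigenvector toEuclideanLin_Amat_hasEigenvector, ?_⟩,
    ?_, fun x hx => nonneg_of_mem_Kcone hx, fun x hx => ⟨inner_gradient_Vquad_toEuclideanLin_Amat x,
    fun hne => ?_⟩⟩
  · have : 1 < √2 := by
      rw [Real.lt_sqrt zero_le_one]
      norm_num
    linarith
  · intro x hx
    simpa [Vquad] using binary_quadratic_pos_of_discrim_neg (a := 2.9) (b := 1) (c := 1)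
      (by norm_num) (by norm_num [discrim]) (EuclideanSpace.fin_two_ne_zero_iff.1 hx)
  · obtain ⟨hx₀, hx₁⟩ := nonneg_of_mem_Kcone hx
    have := binary_quadratic_pos_of_nonneg (a := 6.8) (b := 15.6) (c := 4) (by norm_num)
      (by norm_num) (by norm_num) hx₀ hx₁ (EuclideanSpace.fin_two_ne_zero_iff.1 hne)
    rw [inner_gradient_Vquad_toEuclideanLin_Amat]
    linarith

end
end
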